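/- Importance sampling, compact parameter set: in the importance-sampling setting, suppose the index set T is a compact subset of ℝ^m, T_o is an open set containing T, and p_{T_o} : ℝ × T_o → ℝ is a Borel measurable map with p_{T_o}(·, t) = p_t for every t ∈ T, continuously differentiable in both arguments (x, t). If moreover ∫_ℝ sup_{t∈T} p_t(x) dx < +∞ and f is bounded, then the importance-sampling estimator Ê̲_n^{𝒫/P}(f) is a strongly consistent estimator of E̲^𝒫(f). -/

import Mathlib

open MeasureTheory Filter Topology ProbabilityTheory
open scoped ENNReal

noncomputable section

/-- The positive part of an extended real number, as an element of `ℝ≥0∞`. -/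
def epos (x : EReal) : ℝ≥0∞ := if x = ⊤ then ⊤ else ENNReal.ofReal x.toReal

/-- The (possibly infinite) expectation `E(g) = ∫ g⁺ − ∫ g⁻` of an extended-real map. -/
def eExp {Ω : Type*} [MeasurableSpace Ω] (μ : Measure Ω) (g : Ω → EReal) : EReal :=
  ((∫⁻ ω, epos (g ω) ∂μ : ℝ≥0∞) : EReal) - ((∫⁻ ω, epos (-(g ω)) ∂μ : ℝ≥0∞) : EReal)

/-- `E(g)` exists: at least one of `E(g⁺)`, `E(g⁻)` is finite. -/
def eExpExists {Ω : Type*} [MeasurableSpace Ω] (μ : Measure Ω) (g : Ω → EReal) : Prop :=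
  (∫⁻ ω, epos (g ω) ∂μ) ≠ ⊤ ∨ (∫⁻ ω, epos (-(g ω)) ∂μ) ≠ ⊤

/-- Outer expectation of an arbitrary extended-real map: the infimum of `E(g)` over all
measurable `g ≥ h` whose expectation exists. -/
def outerExp {Ω : Type*} [MeasurableSpace Ω] (μ : Measure Ω) (h : Ω → EReal) : EReal :=
  sInf {y : EReal | ∃ g : Ω → EReal,
    Measurable g ∧ (∀ ω, h ω ≤ g ω) ∧ eExpExists μ g ∧ eExp μ g = y}

/-- Inner expectation of an arbitrary extended-real map. -/
def innerExp {Ω : Type*} [MeasurableSpace Ω] (μ : Measure Ω) (h : Ω → EReal) : EReal :=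
  - outerExp μ (fun ω => - h ω)

/-- `g` is a minimal measurable cover of `h` w.r.t. `μ`: it is measurable, dominates `h`
pointwise, and is a.s. below any measurable map dominating `h` pointwise. -/
def IsMinMeasCover {Ω : Type*} [MeasurableSpace Ω] (μ : Measure Ω) (h g : Ω → EReal) : Prop :=
  Measurable g ∧ (∀ ω, h ω ≤ g ω) ∧
    ∀ g' : Ω → EReal, Measurable g' → (∀ ω, h ω ≤ g' ω) → ∀ᵐ ω ∂μ, g ω ≤ g' ω

/-- Absolute value on extended reals. -/
def eabs (x : EReal) : EReal := max x (-x)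

/-!
The weighted summands `f x * p_t x / p x` are continuous in `t` and dominated by the
`P`-integrable envelope `M * (sup_t p_t x) / p x`, and their `P`-means are the `P_t`-means of `f`.
Around every parameter, the lower bracket `inf_{s ∈ ball d r} f x * p_s x / p x` has integral
close to that at `d` for small `r` (dominated convergence), so finitely many brackets whose
balls cover the compact parameter set, together with the strong law for each of them, bound
the infimum of the empirical means from below; the strong law at one nearly minimising
parameter bounds it from above. Being an infimum over a countable dense set of parameters, the
estimator is measurable, so the error is its own minimal measurable cover.
-/

open Set

theorem measurable_iInf_of_continuous {α K β : Type*} [MeasurableSpace α] [TopologicalSpace K]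
    [TopologicalSpace.SeparableSpace K] [ConditionallyCompleteLinearOrder β] [TopologicalSpace β]
    [OrderTopology β] [SecondCountableTopology β] [MeasurableSpace β] [BorelSpace β]
    {F : α → K → β} (hmeas : ∀ t, Measurable fun x => F x t) (hcont : ∀ x, Continuous (F x)) :
    Measurable fun x => ⨅ t, F x t := by
  obtain ⟨D, hDc, hD⟩ := TopologicalSpace.exists_countable_dense K
  have : Countable D := hDc.to_subtype
  simp_rw [← hD.ciInf' (hcont _)]
  exact .iInf fun d => hmeas d

theorem measurable_iSup_of_continuous {α K β : Type*} [MeasurableSpace α] [TopologicalSpace K]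
    [TopologicalSpace.SeparableSpace K] [ConditionallyCompleteLinearOrder β] [TopologicalSpace β]
    [OrderTopology β] [SecondCountableTopology β] [MeasurableSpace β] [BorelSpace β]
    {F : α → K → β} (hmeas : ∀ t, Measurable fun x => F x t) (hcont : ∀ x, Continuous (F x)) :
    Measurable fun x => ⨆ t, F x t := by
  obtain ⟨D, hDc, hD⟩ := TopologicalSpace.exists_countable_dense K
  have : Countable D := hDc.to_subtype
  simp_rw [← hD.ciSup' (hcont _)]
  exact .iSup fun d => hmeas d

theorem ae_tendsto_of_ae_eventually_bounds {Ω ι : Type*} [MeasurableSpace Ω] {μ : Measure Ω}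
    {l : Filter ι} {X : ι → Ω → ℝ} {L : ℝ}
    (hlow : ∀ c < L, ∀ᵐ ω ∂μ, ∀ᶠ i in l, c ≤ X i ω)
    (hup : ∀ c > L, ∀ᵐ ω ∂μ, ∀ᶠ i in l, X i ω ≤ c) :
    ∀ᵐ ω ∂μ, Tendsto (fun i => X i ω) l (𝓝 L) := by
  have hlow' : ∀ᵐ ω ∂μ, ∀ q : ℚ, (q : ℝ) < L → ∀ᶠ i in l, (q : ℝ) ≤ X i ω := by
    refine ae_all_iff.2 fun q => ?_
    by_cases hq : (q : ℝ) < L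
    · exact (hlow q hq).mono fun _ h _ => h
    · exact ae_of_all _ fun _ h => absurd h hq
  have hup' : ∀ᵐ ω ∂μ, ∀ q : ℚ, L < q → ∀ᶠ i in l, X i ω ≤ q := by
    refine ae_all_iff.2 fun q => ?_
    by_cases hq : L < (q : ℝ)
    · exact (hup q hq).mono fun _ h _ => h
    · exact ae_of_all _ fun _ h => absurd h hq
  filter_upwards [hlow', hup'] with ω hωlow hωup
  refine tendsto_order.2 ⟨fun a ha => ?_, fun b hb => ?_⟩
  · obtain ⟨q, haq, hqL⟩ := exists_rat_btwn ha
    exact (hωlow q hqL).mono fun _ h => haq.trans_le h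
  · obtain ⟨q, hLq, hqb⟩ := exists_rat_btwn hb
    exact (hωup q hLq).mono fun _ h => h.trans_lt hqb

section EmpiricalMean

variable {α : Type*}

def empiricalMean (φ : α → ℝ) (ω : ℕ → α) (n : ℕ) : ℝ :=
  (n : ℝ)⁻¹ * ∑ k ∈ Finset.range n, φ (ω k)

theorem empiricalMean_mono {φ ψ : α → ℝ} (h : ∀ x, φ x ≤ ψ x) (ω : ℕ → α) (n : ℕ) :
    empiricalMean φ ω n ≤ empiricalMean ψ ω n :=
  mul_le_mul_of_nonneg_left (Finset.sum_le_sum fun k _ => h (ω k)) (by positivity)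

theorem continuous_empiricalMean {K : Type*} [TopologicalSpace K] {F : α → K → ℝ}
    (hF : ∀ x, Continuous (F x)) (ω : ℕ → α) (n : ℕ) :
    Continuous fun t => empiricalMean (F · t) ω n :=
  continuous_const.mul (continuous_finsetSum _ fun k _ => hF (ω k))

theorem measurable_empiricalMean [MeasurableSpace α] {φ : α → ℝ} (hφ : Measurable φ) (n : ℕ) :
    Measurable fun ω : ℕ → α => empiricalMean φ ω n :=
  measurable_const.mul (Finset.measurable_sum _ fun k _ => hφ.comp (measurable_pi_apply k))

theorem ae_tendsto_empiricalMean [MeasurableSpace α] {P : Measure α} {μ : Measure (ℕ → α)}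
    (hmap : ∀ k, μ.map (fun ω => ω k) = P) (hind : iIndepFun (fun k (ω : ℕ → α) => ω k) μ)
    {φ : α → ℝ} (hφ : Measurable φ) (hint : Integrable φ P) :
    ∀ᵐ ω ∂μ, Tendsto (empiricalMean φ ω) atTop (𝓝 (∫ x, φ x ∂P)) := by
  have hident : ∀ k, IdentDistrib (fun ω : ℕ → α => φ (ω k)) (fun ω => φ (ω 0)) μ μ := fun k =>
    IdentDistrib.comp ⟨(measurable_pi_apply k).aemeasurable, (measurable_pi_apply 0).aemeasurable,
      (hmap k).trans (hmap 0).symm⟩ hφ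
  have hint0 : Integrable (fun ω : ℕ → α => φ (ω 0)) μ :=
    (integrable_map_measure hφ.aestronglyMeasurable (measurable_pi_apply 0).aemeasurable).1
      (by rwa [hmap 0])
  have hmean : ∫ ω, φ (ω 0) ∂μ = ∫ x, φ x ∂P := by
    rw [← hmap 0, integral_map (measurable_pi_apply 0).aemeasurable hφ.aestronglyMeasurable]
  have hslln := strong_law_ae (fun k (ω : ℕ → α) => φ (ω k)) hint0
    (fun i j hij => (hind.indepFun hij).comp hφ hφ) hident
  simp only [hmean, smul_eq_mul] at hslln
  exact hslln

end EmpiricalMean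

section UniformStrongLaw

variable {α K : Type*} {F : α → K → ℝ} {env : α → ℝ}

theorem bddBelow_range_of_abs_le (hF : ∀ x t, |F x t| ≤ env x) (x : α) (S : Set K) :
    BddBelow (range fun s : S => F x s) :=
  ⟨-env x, by rintro _ ⟨s, rfl⟩; exact neg_le_of_abs_le (hF x s)⟩

theorem bddBelow_range_empiricalMean (hF : ∀ x t, |F x t| ≤ env x) (ω : ℕ → α) (n : ℕ) :
    BddBelow (range fun t => empiricalMean (F · t) ω n) :=
  ⟨empiricalMean (fun x => -env x) ω n, by
    rintro _ ⟨t, rfl⟩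
    exact empiricalMean_mono (fun x => neg_le_of_abs_le (hF x t)) ω n⟩

theorem bddBelow_range_integral [MeasurableSpace α] {P : Measure α} (henv : Integrable env P)
    (hF : ∀ x t, |F x t| ≤ env x) : BddBelow (range fun t => ∫ x, F x t ∂P) :=
  ⟨-∫ x, env x ∂P, by
    rintro _ ⟨t, rfl⟩
    exact neg_le_of_abs_le
      (norm_integral_le_of_norm_le (f := (F · t)) henv (.of_forall fun x => hF x t))⟩

theorem ae_eventually_iInf_empiricalMean_le [MeasurableSpace α] {P : Measure α}
    {μ : Measure (ℕ → α)} [Nonempty K]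
    (hmap : ∀ k, μ.map (fun ω => ω k) = P) (hind : iIndepFun (fun k (ω : ℕ → α) => ω k) μ)
    (hFx : ∀ t, Measurable fun x => F x t) (henv : Integrable env P)
    (hF : ∀ x t, |F x t| ≤ env x) {c : ℝ} (hc : ⨅ t, ∫ x, F x t ∂P < c) :
    ∀ᵐ ω ∂μ, ∀ᶠ n in atTop, ⨅ t, empiricalMean (F · t) ω n ≤ c := by
  obtain ⟨t, ht⟩ := exists_lt_of_ciInf_lt hc
  have hint : Integrable (F · t) P :=
    henv.mono' (hFx t).aestronglyMeasurable (.of_forall fun x => hF x t)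
  filter_upwards [ae_tendsto_empiricalMean hmap hind (hFx t) hint] with ω hω
  filter_upwards [hω.eventually_le_const ht] with n hn
  exact (ciInf_le (bddBelow_range_empiricalMean hF ω n) t).trans hn

variable [MetricSpace K]

def lowerBracket (F : α → K → ℝ) (d : K) (r : ℝ) (x : α) : ℝ :=
  ⨅ s : Metric.ball d r, F x s

theorem lowerBracket_le (hF : ∀ x t, |F x t| ≤ env x) {d t : K} {r : ℝ}
    (ht : t ∈ Metric.ball d r) (x : α) : lowerBracket F d r x ≤ F x t :=
  ciInf_le (bddBelow_range_of_abs_le hF x _) ⟨t, ht⟩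

theorem abs_lowerBracket_le (hF : ∀ x t, |F x t| ≤ env x) (d : K) {r : ℝ} (hr : 0 < r)
    (x : α) : |lowerBracket F d r x| ≤ env x := by
  have : Nonempty (Metric.ball d r) := ⟨⟨d, Metric.mem_ball_self hr⟩⟩
  refine abs_le.2 ⟨le_ciInf fun s => neg_le_of_abs_le (hF x s), ?_⟩
  exact (lowerBracket_le hF (Metric.mem_ball_self hr) x).trans (le_of_abs_le (hF x d))

theorem tendsto_lowerBracket (hF : ∀ x t, |F x t| ≤ env x) (hFt : ∀ x, Continuous (F x))
    (d : K) (x : α) : Tendsto (fun r => lowerBracket F d r x) (𝓝[>] 0) (𝓝 (F x d)) := by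
  refine tendsto_order.2 ⟨fun a ha => ?_, fun b hb => ?_⟩
  · obtain ⟨a', haa', ha'⟩ := exists_between ha
    obtain ⟨δ, hδ, hball⟩ :=
      Metric.eventually_nhds_iff_ball.1 ((hFt x).continuousAt.eventually (lt_mem_nhds ha'))
    filter_upwards [Ioo_mem_nhdsGT hδ] with r hr
    have : Nonempty (Metric.ball d r) := ⟨⟨d, Metric.mem_ball_self hr.1⟩⟩
    refine haa'.trans_le (le_ciInf fun s => (hball s ?_).le)
    exact Metric.ball_subset_ball hr.2.le s.2
  · filter_upwards [self_mem_nhdsWithin] with r hr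
    exact (lowerBracket_le hF (Metric.mem_ball_self hr) x).trans_lt hb

variable [MeasurableSpace α]

theorem measurable_lowerBracket [SecondCountableTopology K] (hFx : ∀ t, Measurable fun x => F x t)
    (hFt : ∀ x, Continuous (F x)) (d : K) (r : ℝ) : Measurable (lowerBracket F d r) :=
  measurable_iInf_of_continuous (fun s => hFx s) fun x => (hFt x).comp continuous_subtype_val

theorem tendsto_integral_lowerBracket [SecondCountableTopology K] {P : Measure α}
    (hFx : ∀ t, Measurable fun x => F x t) (hFt : ∀ x, Continuous (F x))
    (henv : Integrable env P) (hF : ∀ x t, |F x t| ≤ env x) (d : K) :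
    Tendsto (fun r => ∫ x, lowerBracket F d r x ∂P) (𝓝[>] 0) (𝓝 (∫ x, F x d ∂P)) :=
  tendsto_integral_filter_of_dominated_convergence env
    (.of_forall fun r => (measurable_lowerBracket hFx hFt d r).aestronglyMeasurable)
    (eventually_nhdsWithin_of_forall fun _ hr => .of_forall fun x => abs_lowerBracket_le hF d hr x)
    henv (.of_forall fun x => tendsto_lowerBracket hF hFt d x)

variable {P : Measure α} {μ : Measure (ℕ → α)}

theorem ae_eventually_le_iInf_empiricalMean [CompactSpace K] [Nonempty K]
    (hmap : ∀ k, μ.map (fun ω => ω k) = P) (hind : iIndepFun (fun k (ω : ℕ → α) => ω k) μ)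
    (hFx : ∀ t, Measurable fun x => F x t) (hFt : ∀ x, Continuous (F x))
    (henv : Integrable env P) (hF : ∀ x t, |F x t| ≤ env x)
    {c : ℝ} (hc : c < ⨅ t, ∫ x, F x t ∂P) :
    ∀ᵐ ω ∂μ, ∀ᶠ n in atTop, c ≤ ⨅ t, empiricalMean (F · t) ω n := by
  have hradius : ∀ d : K, ∃ r, 0 < r ∧ c < ∫ x, lowerBracket F d r x ∂P := fun d =>
    (((tendsto_integral_lowerBracket hFx hFt henv hF d).eventually_const_lt
      (hc.trans_le (ciInf_le (bddBelow_range_integral henv hF) d))).and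
      self_mem_nhdsWithin).exists.imp fun _ h => ⟨h.2, h.1⟩
  choose r hr0 hr using hradius
  obtain ⟨s, hs⟩ := isCompact_univ.elim_finite_subcover (fun d => Metric.ball d (r d))
    (fun _ => Metric.isOpen_ball) fun t _ => mem_iUnion.2 ⟨t, Metric.mem_ball_self (hr0 t)⟩
  have hint : ∀ d, Integrable (lowerBracket F d (r d)) P := fun d =>
    henv.mono' (measurable_lowerBracket hFx hFt d (r d)).aestronglyMeasurable
      (.of_forall (abs_lowerBracket_le hF d (hr0 d)))
  have hslln : ∀ᵐ ω ∂μ, ∀ d ∈ s, Tendsto (empiricalMean (lowerBracket F d (r d)) ω) atTop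
      (𝓝 (∫ x, lowerBracket F d (r d) x ∂P)) := (eventually_all_finset s).2 fun d _ =>
    ae_tendsto_empiricalMean hmap hind (measurable_lowerBracket hFx hFt d (r d)) (hint d)
  filter_upwards [hslln] with ω hω
  filter_upwards [(eventually_all_finset s).2 fun d hd => (hω d hd).eventually_const_le (hr d)]
    with n hn
  refine le_ciInf fun t => ?_
  obtain ⟨d, hd, htd⟩ := mem_iUnion₂.1 (hs (mem_univ t))
  exact (hn d hd).trans (empiricalMean_mono (lowerBracket_le hF htd) ω n)

theorem ae_tendsto_iInf_empiricalMean [CompactSpace K] [Nonempty K]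
    (hmap : ∀ k, μ.map (fun ω => ω k) = P) (hind : iIndepFun (fun k (ω : ℕ → α) => ω k) μ)
    (hFx : ∀ t, Measurable fun x => F x t) (hFt : ∀ x, Continuous (F x))
    (henv : Integrable env P) (hF : ∀ x t, |F x t| ≤ env x) :
    ∀ᵐ ω ∂μ, Tendsto (fun n => ⨅ t, empiricalMean (F · t) ω n) atTop
      (𝓝 (⨅ t, ∫ x, F x t ∂P)) :=
  ae_tendsto_of_ae_eventually_bounds
    (fun _ hc => ae_eventually_le_iInf_empiricalMean hmap hind hFx hFt henv hF hc)
    (fun _ hc => ae_eventually_iInf_empiricalMean_le hmap hind hFx henv hF hc)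

end UniformStrongLaw

section ImportanceSampling

variable {α : Type*} [MeasurableSpace α] {ν : Measure α} {p : α → ℝ}

theorem integral_mul_div_withDensity {q : α → ℝ} (hp : Measurable p) (hq : Measurable q)
    (hp0 : ∀ x, 0 ≤ p x) (hq0 : ∀ x, 0 ≤ q x) (hsupp : ∀ x, q x ≠ 0 → p x ≠ 0) (g : α → ℝ) :
    ∫ x, g x * q x / p x ∂ν.withDensity (fun x => ENNReal.ofReal (p x)) =
      ∫ x, g x ∂ν.withDensity (fun x => ENNReal.ofReal (q x)) := by
  unfold ENNReal.ofReal
  rw [integral_withDensity_eq_integral_smul hp.real_toNNReal,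
    integral_withDensity_eq_integral_smul hq.real_toNNReal]
  congr 1 with x
  simp only [NNReal.smul_def, Real.coe_toNNReal _ (hp0 x), Real.coe_toNNReal _ (hq0 x),
    smul_eq_mul]
  by_cases hpx : p x = 0
  · rw [hpx, not_imp_not.1 (hsupp x) hpx]
    ring
  · field_simp

theorem integrable_div_withDensity {σ : α → ℝ} (hp : Measurable p) (hσ : Measurable σ)
    (hp0 : ∀ x, 0 ≤ p x) (hσ0 : ∀ x, 0 ≤ σ x) (hfin : ∫⁻ x, ENNReal.ofReal (σ x) ∂ν ≠ ⊤) :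
    Integrable (fun x => σ x / p x) (ν.withDensity fun x => ENNReal.ofReal (p x)) := by
  have hmeas : Measurable fun x => σ x / p x := hσ.div hp
  refine ⟨hmeas.aestronglyMeasurable, ?_⟩
  rw [hasFiniteIntegral_iff_ofReal (.of_forall fun x => div_nonneg (hσ0 x) (hp0 x)),
    lintegral_withDensity_eq_lintegral_mul _ hp.ennreal_ofReal hmeas.ennreal_ofReal]
  refine (lintegral_mono fun x => ?_).trans_lt hfin.lt_top
  rw [Pi.mul_apply, ← ENNReal.ofReal_mul (hp0 x)]
  refine ENNReal.ofReal_le_ofReal ?_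
  by_cases hpx : p x = 0
  · simpa [hpx] using hσ0 x
  · rw [mul_div_cancel₀ _ hpx]

theorem ae_tendsto_iInf_importanceSampling {K : Type*} [MetricSpace K] [CompactSpace K]
    [Nonempty K] {q : K → α → ℝ} {f : α → ℝ} {M : ℝ} {μ : Measure (ℕ → α)}
    (hp : Measurable p) (hp0 : ∀ x, 0 ≤ p x) (hq : ∀ t, Measurable (q t))
    (hq0 : ∀ t x, 0 ≤ q t x) (hqc : ∀ x, Continuous fun t => q t x)
    (hsupp : ∀ t x, q t x ≠ 0 → p x ≠ 0) (hσ : ∫⁻ x, ENNReal.ofReal (⨆ t, q t x) ∂ν ≠ ⊤)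
    (hf : Measurable f) (hM : ∀ x, |f x| ≤ M)
    (hmap : ∀ k, μ.map (fun ω => ω k) = ν.withDensity fun x => ENNReal.ofReal (p x))
    (hind : iIndepFun (fun k (ω : ℕ → α) => ω k) μ) :
    ∀ᵐ ω ∂μ, Tendsto (fun n => ⨅ t, empiricalMean (fun x => f x * q t x / p x) ω n) atTop
      (𝓝 (⨅ t, ∫ x, f x ∂ν.withDensity fun x => ENNReal.ofReal (q t x))) := by
  have hqσ : ∀ t x, q t x ≤ ⨆ s, q s x := fun t x =>
    le_ciSup (isCompact_range (hqc x)).bddAbove t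
  have hσ0 : ∀ x, 0 ≤ ⨆ t, q t x := fun x =>
    (hq0 (Classical.arbitrary K) x).trans (hqσ _ x)
  have henv := (integrable_div_withDensity hp (measurable_iSup_of_continuous hq hqc) hp0 hσ0
    hσ).const_mul M
  have hbound : ∀ x t, |f x * q t x / p x| ≤ M * ((⨆ s, q s x) / p x) := fun x t => by
    rw [mul_div_assoc, abs_mul, abs_of_nonneg (div_nonneg (hq0 t x) (hp0 x))]
    exact mul_le_mul (hM x) (div_le_div_of_nonneg_right (hqσ t x) (hp0 x))
      (div_nonneg (hq0 t x) (hp0 x)) ((abs_nonneg _).trans (hM x))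
  have hlim := ae_tendsto_iInf_empiricalMean (F := fun x t => f x * q t x / p x) hmap hind
    (fun t => ((hf.mul (hq t)).div hp))
    (fun x => (continuous_const.mul (hqc x)).div_const _) henv hbound
  simpa only [integral_mul_div_withDensity hp (hq _) hp0 (hq0 _) (hsupp _)] using hlim

end ImportanceSampling

theorem coe_ciInf_ereal {ι : Sort*} [Nonempty ι] {g : ι → ℝ} (hg : BddBelow (range g)) :
    ((⨅ i, g i : ℝ) : EReal) = ⨅ i, (g i : EReal) :=
  EReal.coe_strictMono.monotone.map_ciInf_of_continuousAt continuous_coe_real_ereal.continuousAt hg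

theorem eabs_coe (r : ℝ) : eabs (r : EReal) = ((|r| : ℝ) : EReal) := by
  rw [eabs, abs_eq_max_neg, EReal.coe_strictMono.monotone.map_max, EReal.coe_neg]

theorem isMinMeasCover_self {Ω : Type*} [MeasurableSpace Ω] {μ : Measure Ω} {h : Ω → EReal}
    (hh : Measurable h) : IsMinMeasCover μ h h :=
  ⟨hh, fun _ => le_rfl, fun _ _ hle => .of_forall hle⟩

theorem exists_isMinMeasCover_eabs_sub_tendsto_zero {Ω ι : Type*} [MeasurableSpace Ω]
    {μ : Measure Ω} [Nonempty ι] {Y : ℕ → Ω → ι → ℝ} {c : ι → ℝ}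
    (hY : ∀ n ω, BddBelow (range (Y n ω))) (hc : BddBelow (range c))
    (hmeas : ∀ n, Measurable fun ω => ⨅ i, Y n ω i)
    (hlim : ∀ᵐ ω ∂μ, Tendsto (fun n => ⨅ i, Y n ω i) atTop (𝓝 (⨅ i, c i))) :
    ∃ H : ℕ → Ω → EReal,
      (∀ n, IsMinMeasCover μ
        (fun ω => eabs ((⨅ i, (Y n ω i : EReal)) - ⨅ i, (c i : EReal))) (H n)) ∧
      ∀ᵐ ω ∂μ, Tendsto (fun n => H n ω) atTop (𝓝 0) := by
  have heq : ∀ n ω, eabs ((⨅ i, (Y n ω i : EReal)) - ⨅ i, (c i : EReal)) =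
      ((|(⨅ i, Y n ω i) - ⨅ i, c i| : ℝ) : EReal) := fun n ω => by
    rw [← coe_ciInf_ereal (hY n ω), ← coe_ciInf_ereal hc, ← EReal.coe_sub, eabs_coe]
  simp_rw [heq]
  refine ⟨_, fun n => isMinMeasCover_self
    (measurable_coe_real_ereal.comp ((hmeas n).sub_const _).abs), ?_⟩
  filter_upwards [hlim] with ω hω
  have hdist := (hω.sub_const (⨅ i, c i)).abs
  rw [sub_self, abs_zero] at hdist
  exact (continuous_coe_real_ereal.tendsto 0).comp hdist

theorem importance_sampling_compact_consistency_general
    {m : ℕ}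
    (T To : Set (EuclideanSpace ℝ (Fin m))) (hTne : T.Nonempty)
    (hTcomp : IsCompact T) (hTTo : T ⊆ To)
    (p : ℝ → ℝ) (hpm : Measurable p) (hp0 : ∀ x, 0 ≤ p x)
    (P : Measure ℝ) (hP : P = volume.withDensity (fun x => ENNReal.ofReal (p x)))
    (pt : EuclideanSpace ℝ (Fin m) → ℝ → ℝ)
    (hptm : ∀ t ∈ T, Measurable (pt t)) (hpt0 : ∀ t ∈ T, ∀ x, 0 ≤ pt t x)
    (Pt : EuclideanSpace ℝ (Fin m) → Measure ℝ)
    (hPt : ∀ t ∈ T, Pt t = volume.withDensity (fun x => ENNReal.ofReal (pt t x)))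
    (hPtprob : ∀ t ∈ T, IsProbabilityMeasure (Pt t))
    (hsupp : ∀ t ∈ T, ∀ x, pt t x ≠ 0 → p x ≠ 0)
    (f : ℝ → ℝ) (hf : Measurable f)
    -- the measurable extension `p_{T_o}`, continuously differentiable in `(x, t)`
    (pTo : ℝ → EuclideanSpace ℝ (Fin m) → ℝ)
    (hagree : ∀ t ∈ T, ∀ x : ℝ, pTo x t = pt t x)
    (hC1 : ContDiffOn ℝ 1 (fun q : ℝ × EuclideanSpace ℝ (Fin m) => pTo q.1 q.2)
      (Set.univ ×ˢ To))
    (hsupdens : ∫⁻ x, ENNReal.ofReal (⨆ t : T, pt t x) ≠ ⊤)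
    (hfbdd : ∃ M : ℝ, ∀ x, |f x| ≤ M)
    (μ : Measure (ℕ → ℝ))
    (hmap : ∀ k : ℕ, μ.map (fun ω => ω k) = P)
    (hind : iIndepFun
      (fun k (ω : ℕ → ℝ) => ω k) μ) :
    ∃ H : ℕ → (ℕ → ℝ) → EReal,
      (∀ n : ℕ, IsMinMeasCover μ
        (fun ω => eabs ((⨅ t : T, (((n : ℝ)⁻¹ *
            ∑ k ∈ Finset.range n, f (ω k) * pt t (ω k) / p (ω k) : ℝ) : EReal)) -
          ⨅ t : T, ((∫ x, f x ∂(Pt t) : ℝ) : EReal))) (H n)) ∧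
      ∀ᵐ ω ∂μ, Tendsto (fun n : ℕ => H n ω) atTop (𝓝 (0 : EReal)) := by
  obtain ⟨M, hM⟩ := hfbdd
  have : CompactSpace T := isCompact_iff_compactSpace.mp hTcomp
  have : Nonempty T := hTne.to_subtype
  have hcont : ∀ x, Continuous fun t : T => pt t x := fun x =>
    (hC1.continuousOn.comp_continuous (continuous_const.prodMk continuous_subtype_val)
      fun t => ⟨mem_univ x, hTTo t.2⟩).congr fun t => hagree t t.2 x
  have hsummand (x : ℝ) : Continuous fun t : T => f x * pt t x / p x :=
    (continuous_const.mul (hcont x)).div_const _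
  have hlim := ae_tendsto_iInf_importanceSampling hpm hp0 (fun t : T => hptm t t.2)
    (fun t => hpt0 t t.2) hcont (fun t => hsupp t t.2) hsupdens hf hM
    (fun k => (hmap k).trans hP) hind
  have htarget : BddBelow (range fun t : T => ∫ x, f x ∂(Pt t)) := ⟨-M, by
    rintro _ ⟨t, rfl⟩
    have := hPtprob t t.2
    have hbound := norm_integral_le_of_norm_le_const (μ := Pt t) (f := f) (.of_forall hM)
    rw [probReal_univ, mul_one, Real.norm_eq_abs] at hbound
    exact neg_le_of_abs_le hbound⟩
  simp_rw [← hPt _ (Subtype.prop _)] at hlim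
  exact exists_isMinMeasCover_eabs_sub_tendsto_zero
    (fun n ω => (isCompact_range (continuous_empiricalMean hsummand ω n)).bddBelow) htarget
    (fun n => measurable_iInf_of_continuous
      (fun t => measurable_empiricalMean ((hf.mul (hptm t t.2)).div hpm) n)
      (fun ω => continuous_empiricalMean hsummand ω n)) hlim

/-- **Importance sampling, compact parameter set.** In the importance-sampling
setting, suppose `T ⊆ ℝ^m` is compact, `T_o` is an open set containing `T`, and
`p_{T_o} : ℝ × T_o → ℝ` is a Borel measurable extension of the densities `(p_t)_{t∈T}`,
continuously differentiable in both arguments. If `∫ sup_{t∈T} p_t(x) dx < +∞` and `f` is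
bounded, then the importance-sampling estimator `Ê̲_n^{𝒫/P}(f)` is a strongly consistent
estimator of `E̲^𝒫(f)`. -/
theorem importance_sampling_compact_consistency
    {m : ℕ}
    (T To : Set (EuclideanSpace ℝ (Fin m))) (hTne : T.Nonempty)
    (hTcomp : IsCompact T) (hTo : IsOpen To) (hTTo : T ⊆ To)
    (p : ℝ → ℝ) (hpm : Measurable p) (hp0 : ∀ x, 0 ≤ p x)
    (P : Measure ℝ) (hP : P = volume.withDensity (fun x => ENNReal.ofReal (p x)))
    [IsProbabilityMeasure P]
    (pt : EuclideanSpace ℝ (Fin m) → ℝ → ℝ)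
    (hptm : ∀ t ∈ T, Measurable (pt t)) (hpt0 : ∀ t ∈ T, ∀ x, 0 ≤ pt t x)
    (Pt : EuclideanSpace ℝ (Fin m) → Measure ℝ)
    (hPt : ∀ t ∈ T, Pt t = volume.withDensity (fun x => ENNReal.ofReal (pt t x)))
    (hPtprob : ∀ t ∈ T, IsProbabilityMeasure (Pt t))
    (hsupp : ∀ t ∈ T, ∀ x, pt t x ≠ 0 → p x ≠ 0)
    (f : ℝ → ℝ) (hf : Measurable f)
    (hfint : ∀ t ∈ T, Integrable f (Pt t))
    (hsup : BddAbove ((fun t => ∫ x, |f x| ∂(Pt t)) '' T))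
    -- the measurable extension `p_{T_o}`, continuously differentiable in `(x, t)`
    (pTo : ℝ → EuclideanSpace ℝ (Fin m) → ℝ)
    (hpTom : Measurable (fun q : ℝ × EuclideanSpace ℝ (Fin m) => pTo q.1 q.2))
    (hagree : ∀ t ∈ T, ∀ x : ℝ, pTo x t = pt t x)
    (hC1 : ContDiffOn ℝ 1 (fun q : ℝ × EuclideanSpace ℝ (Fin m) => pTo q.1 q.2)
      (Set.univ ×ˢ To))
    (hsupdens : ∫⁻ x, ENNReal.ofReal (⨆ t : T, pt t x) ≠ ⊤)
    (hfbdd : ∃ M : ℝ, ∀ x, |f x| ≤ M)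
    (μ : Measure (ℕ → ℝ)) [IsProbabilityMeasure μ]
    (hmap : ∀ k : ℕ, μ.map (fun ω => ω k) = P)
    (hind : iIndepFun
      (fun k (ω : ℕ → ℝ) => ω k) μ) :
    ∃ H : ℕ → (ℕ → ℝ) → EReal,
      (∀ n : ℕ, IsMinMeasCover μ
        (fun ω => eabs ((⨅ t : T, (((n : ℝ)⁻¹ *
            ∑ k ∈ Finset.range n, f (ω k) * pt t (ω k) / p (ω k) : ℝ) : EReal)) -
          ⨅ t : T, ((∫ x, f x ∂(Pt t) : ℝ) : EReal))) (H n)) ∧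
      ∀ᵐ ω ∂μ, Tendsto (fun n : ℕ => H n ω) atTop (𝓝 (0 : EReal)) :=
  importance_sampling_compact_consistency_general T To hTne hTcomp hTTo p hpm hp0 P hP pt hptm hpt0
    Pt hPt hPtprob hsupp f hf pTo hagree hC1 hsupdens hfbdd μ hmap hind
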